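/- arXiv:1203.6848 — 5 statements merged into one kernel-verified Lean document; each statement's English description precedes it below -/
import Mathlib

section
/- Let λ, μ, β > 0 with λ ≤ 2μβ and set ρ = λ/μ. Define the functional F on continuous functions x : [0,∞) → ℝ by F(x)(t) = (2μβ − λ)t − μ∫₀ᵗ (3x(u) + 2μ∫₀ᵘ x(v) dv) du. Then the pair (x₁, r) with x₁(t) = (2β − ρ)(e^{−μt} − e^{−2μt}) and r ≡ 0 is the unique solution of the generalized Skorokhod problem associated with F; moreover x₁(t) ≥ 0 for all t ≥ 0 and μ∫₀ᵗ x₁(u) du = (β − ρ/2)(1 − 2e^{−μt} + e^{−2μt}) for all t ≥ 0. -/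
open Real Set intervalIntegral

/-- A pair `(x, r)` of continuous functions on `[0,∞)` is a solution of the Skorokhod
problem associated with `z` if `x = z + r`, `x ≥ 0`, `r` is nondecreasing with `r 0 = 0`,
and `r` increases only at times where `x` vanishes. -/
def IsSkorokhodSolution (z x r : ℝ → ℝ) : Prop :=
  ContinuousOn x (Set.Ici 0) ∧ ContinuousOn r (Set.Ici 0) ∧
  (∀ t, 0 ≤ t → x t = z t + r t) ∧
  (∀ t, 0 ≤ t → 0 ≤ x t) ∧
  MonotoneOn r (Set.Ici 0) ∧ r 0 = 0 ∧
  (∀ s t, 0 ≤ s → s ≤ t → (∀ u, u ∈ Set.Icc s t → 0 < x u) → r s = r t)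

/-- A pair `(x, r)` is a solution of the generalized Skorokhod problem associated with a
functional `G` if it is a solution of the Skorokhod problem associated with `G x`. -/
def IsGSPSolution (G : (ℝ → ℝ) → (ℝ → ℝ)) (x r : ℝ → ℝ) : Prop :=
  IsSkorokhodSolution (G x) x r

/-!
The Skorokhod map is Lipschitz: if `|z - z'| ≤ δ` on `[0, t]`, the regulators of the two
reflected paths differ by at most `δ` at time `t`, and the paths themselves by at most `2δ`.
The functional `F` is Lipschitz in the Volterra sense, `|F x t - F y t| ≤ K_T ∫₀ᵗ |x - y|`
on `[0, T]`, so Grönwall's inequality applied to `∫₀ᵗ |x - x'|` shows that the generalized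
Skorokhod problem for `F` has at most one solution. Existence is a direct computation:
`x₁ ≥ 0` and `x₁ = F x₁`, so `(x₁, 0)` is a solution.
-/

namespace IsSkorokhodSolution

theorem of_nonneg_of_eqOn {z x : ℝ → ℝ} (hx : ContinuousOn x (Ici 0))
    (hx_nonneg : ∀ t, 0 ≤ t → 0 ≤ x t) (hxz : EqOn x z (Ici 0)) :
    IsSkorokhodSolution z x (fun _ => 0) :=
  ⟨hx, continuousOn_const, fun t ht => by simp [hxz ht], hx_nonneg, fun _ _ _ _ _ => le_rfl, rfl,
    fun _ _ _ _ _ => rfl⟩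

variable {z x r z' x' r' : ℝ → ℝ}

theorem le_add_of_forall_sub_le (h : IsSkorokhodSolution z x r)
    (h' : IsSkorokhodSolution z' x' r') {t δ : ℝ} (ht : 0 ≤ t) (hδ : 0 ≤ δ)
    (hz : ∀ s ∈ Icc 0 t, z' s - z s ≤ δ) : r t ≤ r' t + δ := by
  obtain ⟨-, hr, hxz, -, -, hr0, hcompl⟩ := h
  obtain ⟨-, hr', hxz', hx'nn, hr'mono, hr'0, -⟩ := h'
  by_contra! hlt
  set S := Icc 0 t ∩ (fun u => r u - r' u) ⁻¹' Iic δ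
  have hS : IsClosed S :=
    ((hr.mono Icc_subset_Ici_self).sub (hr'.mono Icc_subset_Ici_self)).preimage_isClosed_of_isClosed
      isClosed_Icc isClosed_Iic
  have h0S : (0 : ℝ) ∈ S := ⟨⟨le_rfl, ht⟩, by simp [hr0, hr'0, hδ]⟩
  obtain ⟨⟨hs0, hst⟩, hsδ⟩ := hS.csSup_mem ⟨0, h0S⟩ ⟨t, fun u hu => hu.1.2⟩
  set s := sSup S
  have hst : s < t := hst.lt_of_ne fun hs => by
    simp only [mem_preimage, mem_Iic, hs] at hsδ
    linarith
  -- beyond the last time `s` at which `r ≤ r' + δ`, `x` exceeds `x' ≥ 0`, so `r` is constant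
  have hx : ∀ u ∈ Ioc s t, 0 < x u := fun u hu => by
    have hu0 : 0 ≤ u := hs0.trans hu.1.le
    have huS : u ∉ S := fun huS => (le_csSup ⟨t, fun v hv => hv.1.2⟩ huS).not_gt hu.1
    have : δ + r' u < r u := by simpa [S, hu0, hu.2] using huS
    linarith [hxz u hu0, hxz' u hu0, hx'nn u hu0, hz u ⟨hu0, hu.2⟩]
  have hconst : EqOn r (fun _ => r t) (Icc s t) :=
    EqOn.of_subset_closure
      (fun u hu => hcompl u t (hs0.trans hu.1.le) hu.2 fun v hv => hx v ⟨hu.1.trans_le hv.1, hv.2⟩)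
      (hr.mono fun u hu => hs0.trans hu.1) continuousOn_const Ioc_subset_Icc_self
      (closure_Ioc hst.ne).ge
  have := hr'mono (mem_Ici.2 hs0) (mem_Ici.2 ht) hst.le
  have := hconst ⟨le_rfl, hst.le⟩
  simp only [mem_preimage, mem_Iic] at hsδ
  linarith

theorem abs_sub_le_of_forall_abs_sub_le (h : IsSkorokhodSolution z x r)
    (h' : IsSkorokhodSolution z' x' r') {t δ : ℝ} (ht : 0 ≤ t)
    (hz : ∀ s ∈ Icc 0 t, |z s - z' s| ≤ δ) : |r t - r' t| ≤ δ := by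
  have hδ : 0 ≤ δ := (abs_nonneg _).trans (hz 0 ⟨le_rfl, ht⟩)
  rw [abs_sub_le_iff, sub_le_iff_le_add', sub_le_iff_le_add']
  exact ⟨h.le_add_of_forall_sub_le h' ht hδ fun s hs =>
      (neg_sub (z s) (z' s) ▸ neg_le_abs _).trans (hz s hs),
    h'.le_add_of_forall_sub_le h ht hδ fun s hs => (le_abs_self _).trans (hz s hs)⟩

theorem abs_sub_le_two_mul_of_forall_abs_sub_le (h : IsSkorokhodSolution z x r)
    (h' : IsSkorokhodSolution z' x' r') {t δ : ℝ} (ht : 0 ≤ t)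
    (hz : ∀ s ∈ Icc 0 t, |z s - z' s| ≤ δ) : |x t - x' t| ≤ 2 * δ := by
  have hr := h.abs_sub_le_of_forall_abs_sub_le h' ht hz
  calc |x t - x' t| = |(z t - z' t) + (r t - r' t)| := by
        rw [h.2.2.1 t ht, h'.2.2.1 t ht]; ring_nf
    _ ≤ |z t - z' t| + |r t - r' t| := abs_add_le _ _
    _ ≤ 2 * δ := by linarith [hz t ⟨ht, le_rfl⟩]

end IsSkorokhodSolution

lemma continuousOn_primitive_Icc_zero {x : ℝ → ℝ} {t : ℝ} (ht : 0 ≤ t)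
    (hx : ContinuousOn x (Icc 0 t)) : ContinuousOn (fun u => ∫ v in (0:ℝ)..u, x v) (Icc 0 t) := by
  simpa [uIcc_of_le ht] using
    continuousOn_primitive_interval' (hx.intervalIntegrable_of_Icc ht) left_mem_uIcc

theorem IsGSPSolution.eqOn_of_abs_sub_le {G : (ℝ → ℝ) → ℝ → ℝ} {x r x' r' : ℝ → ℝ}
    (h : IsGSPSolution G x r) (h' : IsGSPSolution G x' r')
    (hG : ∀ T, 0 ≤ T → ∃ K, ∀ t ∈ Icc 0 T,
      |G x t - G x' t| ≤ K * ∫ u in (0:ℝ)..t, |x u - x' u|) :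
    EqOn x x' (Ici 0) ∧ EqOn r r' (Ici 0) := by
  set e : ℝ → ℝ := fun u => |x u - x' u|
  set Φ : ℝ → ℝ := fun t => ∫ u in (0:ℝ)..t, e u
  have he : ContinuousOn e (Ici 0) := (h.1.sub h'.1).abs
  have he_int : ∀ t, 0 ≤ t → IntervalIntegrable e MeasureTheory.volume 0 t := fun t ht =>
    (he.mono Icc_subset_Ici_self).intervalIntegrable_of_Icc ht
  have hΦ_nonneg : ∀ t, 0 ≤ t → 0 ≤ Φ t := fun t ht =>
    integral_nonneg ht fun _ _ => abs_nonneg _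
  have hΦ_mono : ∀ s t, 0 ≤ s → s ≤ t → Φ s ≤ Φ t := fun s t hs hst =>
    integral_mono_interval le_rfl hs hst (Filter.Eventually.of_forall fun _ => abs_nonneg _)
      (he_int t (hs.trans hst))
  have hbound : ∀ T, 0 ≤ T → ∃ K, ∀ t ∈ Icc 0 T,
      |r t - r' t| ≤ K * Φ t ∧ |x t - x' t| ≤ 2 * (K * Φ t) := by
    intro T hT
    obtain ⟨K, hK⟩ := hG T hT
    refine ⟨max K 0, fun t ht => ?_⟩
    have hz : ∀ s ∈ Icc 0 t, |G x s - G x' s| ≤ max K 0 * Φ t := fun s hs =>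
      calc |G x s - G x' s| ≤ K * Φ s := hK s ⟨hs.1, hs.2.trans ht.2⟩
        _ ≤ max K 0 * Φ s := mul_le_mul_of_nonneg_right (le_max_left K 0) (hΦ_nonneg s hs.1)
        _ ≤ max K 0 * Φ t := mul_le_mul_of_nonneg_left (hΦ_mono s t hs.1 hs.2) (le_max_right K 0)
    exact ⟨h.abs_sub_le_of_forall_abs_sub_le h' ht.1 hz,
      h.abs_sub_le_two_mul_of_forall_abs_sub_le h' ht.1 hz⟩
  have hΦ_zero : ∀ T, 0 ≤ T → Φ T = 0 := by
    intro T hT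
    obtain ⟨K, hK⟩ := hbound T hT
    have hΦ_cont : ContinuousOn Φ (Icc 0 T) :=
      continuousOn_primitive_Icc_zero hT (he.mono Icc_subset_Ici_self)
    have hΦ_deriv : ∀ t ∈ Ico 0 T, HasDerivWithinAt Φ (e t) (Ici t) t := fun t ht =>
      have hIoi : Ioi t ⊆ Ici 0 := fun u hu => ht.1.trans (le_of_lt hu)
      integral_hasDerivWithinAt_right (he_int t ht.1)
        ((he.mono hIoi).stronglyMeasurableAtFilter_nhdsWithin measurableSet_Ioi t)
        ((he t ht.1).mono hIoi)
    refine eq_zero_of_abs_deriv_le_mul_abs_self_of_eq_zero_right (K := 2 * K) hΦ_cont hΦ_deriv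
      integral_same (fun t ht => ?_) T ⟨hT, le_rfl⟩
    rw [Real.norm_eq_abs, Real.norm_eq_abs, abs_abs, abs_of_nonneg (hΦ_nonneg t ht.1), mul_assoc]
    exact (hK t (Ico_subset_Icc_self ht)).2
  have hxr : ∀ t, 0 ≤ t → x t = x' t ∧ r t = r' t := fun t ht => by
    obtain ⟨K, hK⟩ := hbound t ht
    obtain ⟨hr, hx⟩ := hK t ⟨ht, le_rfl⟩
    simp only [hΦ_zero t ht, mul_zero, abs_nonpos_iff, sub_eq_zero] at hr hx
    exact ⟨hx, hr⟩
  exact ⟨fun t ht => (hxr t ht).1, fun t ht => (hxr t ht).2⟩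

noncomputable def fluidFunctional (a mu : ℝ) (x : ℝ → ℝ) (t : ℝ) : ℝ :=
  a * t - mu * ∫ u in (0:ℝ)..t, (3 * x u + 2 * mu * ∫ v in (0:ℝ)..u, x v)

lemma abs_fluidFunctional_sub_le (a mu : ℝ) {x y : ℝ → ℝ} {t : ℝ} (ht : 0 ≤ t)
    (hx : ContinuousOn x (Icc 0 t)) (hy : ContinuousOn y (Icc 0 t)) :
    |fluidFunctional a mu x t - fluidFunctional a mu y t|
      ≤ |mu| * (3 + 2 * |mu| * t) * ∫ u in (0:ℝ)..t, |x u - y u| := by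
  set Φ := ∫ u in (0:ℝ)..t, |x u - y u|
  have hinteg : ∀ {f : ℝ → ℝ} {u}, ContinuousOn f (Icc 0 t) → u ∈ Icc 0 t →
      IntervalIntegrable f MeasureTheory.volume 0 u := fun hf hu =>
    (hf.mono (Icc_subset_Icc_right hu.2)).intervalIntegrable_of_Icc hu.1
  have hxy : ContinuousOn (fun u => |x u - y u|) (Icc 0 t) := (hx.sub hy).abs
  have hg : ∀ {f : ℝ → ℝ}, ContinuousOn f (Icc 0 t) →
      ContinuousOn (fun u => 3 * f u + 2 * mu * ∫ v in (0:ℝ)..u, f v) (Icc 0 t) := fun hf =>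
    (continuousOn_const.mul hf).add (continuousOn_const.mul (continuousOn_primitive_Icc_zero ht hf))
  have hpt : ∀ u ∈ Icc 0 t, |(3 * x u + 2 * mu * ∫ v in (0:ℝ)..u, x v)
      - (3 * y u + 2 * mu * ∫ v in (0:ℝ)..u, y v)| ≤ 3 * |x u - y u| + 2 * |mu| * Φ := by
    intro u hu
    calc _ = |3 * (x u - y u) + 2 * mu * ∫ v in (0:ℝ)..u, (x v - y v)| := by
          rw [integral_sub (hinteg hx hu) (hinteg hy hu)]; ring_nf
      _ ≤ 3 * |x u - y u| + 2 * |mu| * ∫ v in (0:ℝ)..u, |x v - y v| := by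
          refine (abs_add_le _ _).trans ?_
          rw [abs_mul, abs_mul, abs_mul, abs_two, abs_of_pos three_pos]
          gcongr
          exact abs_integral_le_integral_abs hu.1
      _ ≤ 3 * |x u - y u| + 2 * |mu| * Φ := by
          gcongr
          exact integral_mono_interval le_rfl hu.1 hu.2
            (Filter.Eventually.of_forall fun _ => abs_nonneg _) (hinteg hxy ⟨ht, le_rfl⟩)
  calc _ = |mu| * |∫ u in (0:ℝ)..t, ((3 * x u + 2 * mu * ∫ v in (0:ℝ)..u, x v)
        - (3 * y u + 2 * mu * ∫ v in (0:ℝ)..u, y v))| := by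
        rw [integral_sub (hinteg (hg hx) ⟨ht, le_rfl⟩) (hinteg (hg hy) ⟨ht, le_rfl⟩), ← abs_mul,
          ← abs_neg]
        unfold fluidFunctional
        ring_nf
    _ ≤ |mu| * ∫ u in (0:ℝ)..t, (3 * |x u - y u| + 2 * |mu| * Φ) := by
        gcongr
        refine (abs_integral_le_integral_abs ht).trans (integral_mono_on ht ?_ ?_ hpt)
        · exact hinteg ((hg hx).sub (hg hy)).abs ⟨ht, le_rfl⟩
        · exact hinteg ((continuousOn_const.mul hxy).add continuousOn_const) ⟨ht, le_rfl⟩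
    _ = |mu| * (3 + 2 * |mu| * t) * Φ := by
        rw [integral_add ((hinteg hxy ⟨ht, le_rfl⟩).const_mul 3) intervalIntegrable_const,
          integral_const_mul, intervalIntegral.integral_const, smul_eq_mul]
        ring

theorem IsGSPSolution.eqOn_of_fluidFunctional {a mu : ℝ} {x r x' r' : ℝ → ℝ}
    (h : IsGSPSolution (fluidFunctional a mu) x r)
    (h' : IsGSPSolution (fluidFunctional a mu) x' r') :
    EqOn x x' (Ici 0) ∧ EqOn r r' (Ici 0) :=
  h.eqOn_of_abs_sub_le h' fun T _ => ⟨|mu| * (3 + 2 * |mu| * T), fun t ht =>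
    (abs_fluidFunctional_sub_le a mu ht.1 (h.1.mono Icc_subset_Ici_self)
      (h'.1.mono Icc_subset_Ici_self)).trans <| by
        gcongr
        · exact integral_nonneg ht.1 fun _ _ => abs_nonneg _
        · exact ht.2⟩

lemma integral_exp_neg_mul {a : ℝ} (ha : a ≠ 0) (t : ℝ) :
    ∫ u in (0:ℝ)..t, exp (-(a * u)) = (1 - exp (-(a * t))) / a := by
  simp [integral_comp_mul_left (fun y => exp (-y)) ha, integral_comp_neg, integral_exp]
  field_simp

noncomputable def fluidSolution (mu c t : ℝ) : ℝ := c * (exp (-(mu * t)) - exp (-(2 * mu * t)))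

lemma continuous_fluidSolution (mu c : ℝ) : Continuous (fluidSolution mu c) := by
  unfold fluidSolution; fun_prop

lemma fluidSolution_nonneg {mu c t : ℝ} (hmu : 0 ≤ mu) (hc : 0 ≤ c) (ht : 0 ≤ t) :
    0 ≤ fluidSolution mu c t :=
  mul_nonneg hc <| sub_nonneg.2 <| exp_le_exp.2 <| by nlinarith [mul_nonneg hmu ht]

lemma integral_fluidSolution {mu : ℝ} (hmu : mu ≠ 0) (c t : ℝ) :
    ∫ u in (0:ℝ)..t, fluidSolution mu c u
      = c / (2 * mu) * (1 - 2 * exp (-(mu * t)) + exp (-(2 * mu * t))) := by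
  have h2mu : 2 * mu ≠ 0 := mul_ne_zero two_ne_zero hmu
  unfold fluidSolution
  rw [integral_const_mul, integral_sub (Continuous.intervalIntegrable (by fun_prop) _ _)
    (Continuous.intervalIntegrable (by fun_prop) _ _), integral_exp_neg_mul hmu,
    integral_exp_neg_mul h2mu]
  field_simp
  ring

lemma fluidFunctional_fluidSolution {mu : ℝ} (hmu : mu ≠ 0) (c t : ℝ) :
    fluidFunctional (mu * c) mu (fluidSolution mu c) t = fluidSolution mu c t := by
  have h2mu : 2 * mu ≠ 0 := mul_ne_zero two_ne_zero hmu
  have hintegrand :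
      (fun u => 3 * fluidSolution mu c u + 2 * mu * ∫ v in (0:ℝ)..u, fluidSolution mu c v)
        = fun u => c + c * exp (-(mu * u)) - 2 * c * exp (-(2 * mu * u)) := by
    ext u
    rw [integral_fluidSolution hmu]
    unfold fluidSolution
    field_simp
    ring
  unfold fluidFunctional
  rw [hintegrand, integral_sub (Continuous.intervalIntegrable (by fun_prop) _ _)
    (Continuous.intervalIntegrable (by fun_prop) _ _), integral_add
    (Continuous.intervalIntegrable (by fun_prop) _ _)
    (Continuous.intervalIntegrable (by fun_prop) _ _),
    integral_const_mul, integral_const_mul, integral_exp_neg_mul hmu, integral_exp_neg_mul h2mu,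
    intervalIntegral.integral_const, smul_eq_mul]
  unfold fluidSolution
  field_simp
  ring

theorem isGSPSolution_fluidSolution {mu c : ℝ} (hmu : 0 < mu) (hc : 0 ≤ c) :
    IsGSPSolution (fluidFunctional (mu * c) mu) (fluidSolution mu c) (fun _ => 0) :=
  .of_nonneg_of_eqOn (continuous_fluidSolution mu c).continuousOn
    (fun _ => fluidSolution_nonneg hmu.le hc)
    (fun t _ => (fluidFunctional_fluidSolution hmu.ne' c t).symm)

theorem fluid_limit_overloaded_general
    (lam mu beta rho : ℝ) (hmu : 0 < mu)
    (hover : lam ≤ 2 * mu * beta) (hrho : rho = lam / mu)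
    (F : (ℝ → ℝ) → (ℝ → ℝ))
    (hF : ∀ x t, F x t =
      (2 * mu * beta - lam) * t
        - mu * ∫ u in (0:ℝ)..t, (3 * x u + 2 * mu * ∫ v in (0:ℝ)..u, x v))
    (x₁ : ℝ → ℝ)
    (hx₁ : ∀ t, x₁ t = (2 * beta - rho) * (Real.exp (-(mu * t)) - Real.exp (-(2 * mu * t)))) :
    IsGSPSolution F x₁ (fun _ => 0) ∧
    (∀ x r, IsGSPSolution F x r → ∀ t, 0 ≤ t → x t = x₁ t ∧ r t = 0) ∧
    (∀ t, 0 ≤ t → 0 ≤ x₁ t) ∧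
    (∀ t, 0 ≤ t → mu * ∫ u in (0:ℝ)..t, x₁ u
      = (beta - rho / 2) * (1 - 2 * Real.exp (-(mu * t)) + Real.exp (-(2 * mu * t)))) := by
  subst hrho
  set c := 2 * beta - lam / mu with hc_def
  have hc : 0 ≤ c := by rw [hc_def, sub_nonneg, div_le_iff₀ hmu]; linarith
  have hdrift : 2 * mu * beta - lam = mu * c := by rw [hc_def]; field_simp
  obtain rfl : F = fluidFunctional (mu * c) mu := by
    ext x t
    rw [hF, fluidFunctional, hdrift]
  obtain rfl : x₁ = fluidSolution mu c := funext hx₁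
  have hsol := isGSPSolution_fluidSolution hmu hc
  refine ⟨hsol, fun x r h t ht => ?_, fun t ht => fluidSolution_nonneg hmu.le hc ht, fun t _ => ?_⟩
  · obtain ⟨hx, hr⟩ := h.eqOn_of_fluidFunctional hsol
    exact ⟨hx ht, hr ht⟩
  · rw [integral_fluidSolution hmu.ne', hc_def]
    field_simp

theorem fluid_limit_overloaded
    (lam mu beta rho : ℝ) (hlam : 0 < lam) (hmu : 0 < mu) (hbeta : 0 < beta)
    (hover : lam ≤ 2 * mu * beta) (hrho : rho = lam / mu)
    (F : (ℝ → ℝ) → (ℝ → ℝ))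
    (hF : ∀ x t, F x t =
      (2 * mu * beta - lam) * t
        - mu * ∫ u in (0:ℝ)..t, (3 * x u + 2 * mu * ∫ v in (0:ℝ)..u, x v))
    (x₁ : ℝ → ℝ)
    (hx₁ : ∀ t, x₁ t = (2 * beta - rho) * (Real.exp (-(mu * t)) - Real.exp (-(2 * mu * t)))) :
    IsGSPSolution F x₁ (fun _ => 0) ∧
    (∀ x r, IsGSPSolution F x r → ∀ t, 0 ≤ t → x t = x₁ t ∧ r t = 0) ∧
    (∀ t, 0 ≤ t → 0 ≤ x₁ t) ∧
    (∀ t, 0 ≤ t → mu * ∫ u in (0:ℝ)..t, x₁ u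
      = (beta - rho / 2) * (1 - 2 * Real.exp (-(mu * t)) + Real.exp (-(2 * mu * t)))) :=
  fluid_limit_overloaded_general lam mu beta rho hmu hover hrho F hF x₁ hx₁
end

section
/- Let λ, μ, β > 0 with λ > 2μβ. Define the functional F on continuous functions x : [0,∞) → ℝ by F(x)(t) = (2μβ − λ)t − μ∫₀ᵗ (3x(u) + 2μ∫₀ᵘ x(v) dv) du. Then the unique solution of the generalized Skorokhod problem associated with F is the pair (x, r) with x ≡ 0 and r(t) = (λ − 2μβ)t. -/
open Real Set intervalIntegral

theorem fluid_limit_stable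
    (lam mu beta : ℝ) (hlam : 0 < lam) (hmu : 0 < mu) (hbeta : 0 < beta)
    (hstable : 2 * mu * beta < lam)
    (F : (ℝ → ℝ) → (ℝ → ℝ))
    (hF : ∀ x t, F x t =
      (2 * mu * beta - lam) * t
        - mu * ∫ u in (0:ℝ)..t, (3 * x u + 2 * mu * ∫ v in (0:ℝ)..u, x v)) :
    IsGSPSolution F (fun _ => 0) (fun t => (lam - 2 * mu * beta) * t) ∧
    (∀ x r, IsGSPSolution F x r → ∀ t, 0 ≤ t →
      x t = 0 ∧ r t = (lam - 2 * mu * beta) * t) := by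
  constructor
  · refine ⟨continuousOn_const, (Continuous.continuousOn (by continuity)), ?_, ?_, ?_, ?_, ?_⟩
    · intro t ht
      simp only [hF]
      simp
      ring
    · intro t _; exact le_rfl
    · intro a _ b _ hab
      exact mul_le_mul_of_nonneg_left hab (by linarith)
    · simp
    · intro s t hs hst hpos
      exact absurd (hpos s ⟨le_rfl, hst⟩) (lt_irrefl 0)
  · rintro x r ⟨hxc, hrc, heq, hxnn, hrmono, hr0, hflat⟩
    -- x 0 = 0
    have hFx0 : F x 0 = 0 := by rw [hF]; simp
    have hx0 : x 0 = 0 := by rw [heq 0 le_rfl, hFx0, hr0]; ring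
    set g : ℝ → ℝ := fun u => 3 * x u + 2 * mu * ∫ v in (0:ℝ)..u, x v with hg
    -- continuity of g on [0,T] for T ≥ 0
    have hgc : ∀ T : ℝ, 0 ≤ T → ContinuousOn g (Icc 0 T) := by
      intro T hT
      have hxcT : ContinuousOn x (Icc 0 T) := hxc.mono (fun u hu => hu.1)
      have hxInt : MeasureTheory.IntegrableOn x (uIcc 0 T) := by
        rw [uIcc_of_le hT]; exact hxcT.integrableOn_Icc
      have hXc : ContinuousOn (fun u => ∫ v in (0:ℝ)..u, x v) (Icc 0 T) := by
        have := intervalIntegral.continuousOn_primitive_interval (a := 0) (b := T) hxInt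
        rwa [uIcc_of_le hT] at this
      exact ((continuousOn_const.mul hxcT).add (continuousOn_const.mul hXc))
    have hg_nonneg : ∀ u, 0 ≤ u → 0 ≤ g u := by
      intro u hu
      have h1 : 0 ≤ x u := hxnn u hu
      have h2 : 0 ≤ ∫ v in (0:ℝ)..u, x v :=
        intervalIntegral.integral_nonneg hu (fun v hv => hxnn v hv.1)
      have : (0:ℝ) ≤ 3 * x u + 2 * mu * ∫ v in (0:ℝ)..u, x v := by positivity
      exact this
    -- main claim
    have key : ∀ t, 0 ≤ t → x t = 0 := by
      intro t ht
      by_contra hne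
      have hxt : 0 < x t := lt_of_le_of_ne (hxnn t ht) (Ne.symm hne)
      set S : Set ℝ := Icc 0 t ∩ x ⁻¹' {0} with hS
      have hS_ne : S.Nonempty := ⟨0, ⟨le_rfl, ht⟩, hx0⟩
      have hS_bdd : BddAbove S := ⟨t, fun u hu => hu.1.2⟩
      have hS_closed : IsClosed S :=
        (hxc.mono (fun u (hu : u ∈ Icc 0 t) => hu.1)).preimage_isClosed_of_isClosed
          isClosed_Icc isClosed_singleton
      set s := sSup S with hsdef
      have hs_mem : s ∈ S := hS_closed.csSup_mem hS_ne hS_bdd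
      have hs0 : 0 ≤ s := hs_mem.1.1
      have hst : s ≤ t := hs_mem.1.2
      have hxs : x s = 0 := hs_mem.2
      have hs_lt : s < t := lt_of_le_of_ne hst (fun h => absurd (h ▸ hxs) hxt.ne')
      have hpos : ∀ u ∈ Ioc s t, 0 < x u := by
        intro u hu
        refine lt_of_le_of_ne (hxnn u (hs0.trans hu.1.le)) fun h => ?_
        have : u ∈ S := ⟨⟨hs0.trans hu.1.le, hu.2⟩, h.symm⟩
        exact absurd (le_csSup hS_bdd this) (not_le.2 hu.1)
      -- choose s' close to s with x s' small
      have hcw : ContinuousWithinAt x (Ici 0) s := hxc s hs0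
      have hev : ∀ᶠ u in nhdsWithin s (Ici 0), x u < x t / 2 := by
        have hmem : Iio (x t / 2) ∈ nhds (x s) := by
          rw [hxs]; exact Iio_mem_nhds (by positivity)
        exact hcw hmem
      have hsub : Ioi s ⊆ Ici (0:ℝ) := fun u hu => hs0.trans (le_of_lt hu)
      have hev' : ∀ᶠ u in nhdsWithin s (Ioi s), x u < x t / 2 :=
        hev.filter_mono (nhdsWithin_mono s hsub)
      have hmem : Ioc s t ∈ nhdsWithin s (Ioi s) := Ioc_mem_nhdsGT_of_mem ⟨le_rfl, hs_lt⟩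
      obtain ⟨s', hs'1, hs'2⟩ := (hev'.and (Filter.eventually_of_mem hmem fun u hu => hu)).exists
      have hs'0 : 0 ≤ s' := hs0.trans hs'2.1.le
      have hs't : s' ≤ t := hs'2.2
      -- r flat on [s', t]
      have hrr : r s' = r t :=
        hflat s' t hs'0 hs't (fun u hu => hpos u ⟨lt_of_lt_of_le hs'2.1 hu.1, hu.2⟩)
      -- integral splitting
      have hint1 : IntervalIntegrable g MeasureTheory.volume 0 s' := by
        apply ContinuousOn.intervalIntegrable
        rw [uIcc_of_le hs'0]
        exact (hgc t ht).mono (Icc_subset_Icc le_rfl hs't)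
      have hint2 : IntervalIntegrable g MeasureTheory.volume s' t := by
        apply ContinuousOn.intervalIntegrable
        rw [uIcc_of_le hs't]
        exact (hgc t ht).mono (Icc_subset_Icc hs'0 le_rfl)
      have hIadd : (∫ u in (0:ℝ)..s', g u) + ∫ u in s'..t, g u = ∫ u in (0:ℝ)..t, g u :=
        intervalIntegral.integral_add_adjacent_intervals hint1 hint2
      have hInn : 0 ≤ ∫ u in s'..t, g u :=
        intervalIntegral.integral_nonneg hs't (fun u hu => hg_nonneg u (hs'0.trans hu.1))
      have e1 := heq t ht
      have e2 := heq s' hs'0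
      rw [hF] at e1 e2
      have hgt : (∫ u in (0:ℝ)..t, (3 * x u + 2 * mu * ∫ v in (0:ℝ)..u, x v))
          = ∫ u in (0:ℝ)..t, g u := rfl
      have hgs : (∫ u in (0:ℝ)..s', (3 * x u + 2 * mu * ∫ v in (0:ℝ)..u, x v))
          = ∫ u in (0:ℝ)..s', g u := rfl
      rw [hgt] at e1
      rw [hgs] at e2
      have hcoef : (2 * mu * beta - lam) * t - (2 * mu * beta - lam) * s' ≤ 0 := by
        have : (2 * mu * beta - lam) * (t - s') ≤ 0 :=
          mul_nonpos_of_nonpos_of_nonneg (by linarith) (by linarith)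
        linarith [this]
      have hmuInt : 0 ≤ mu * ∫ u in s'..t, g u := mul_nonneg hmu.le hInn
      nlinarith [hs'1, hxt]
    -- conclude
    intro t ht
    have hxt0 : x t = 0 := key t ht
    refine ⟨hxt0, ?_⟩
    have hIzero : (∫ u in (0:ℝ)..t, (3 * x u + 2 * mu * ∫ v in (0:ℝ)..u, x v)) = 0 := by
      have : ∀ u ∈ uIcc (0:ℝ) t, (3 * x u + 2 * mu * ∫ v in (0:ℝ)..u, x v) = 0 := by
        intro u hu
        rw [uIcc_of_le ht] at hu
        have hxu : x u = 0 := key u hu.1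
        have hXu : (∫ v in (0:ℝ)..u, x v) = 0 := by
          have : EqOn x (fun _ => (0:ℝ)) (uIcc (0:ℝ) u) := by
            intro v hv
            rw [uIcc_of_le hu.1] at hv
            exact key v hv.1
          rw [intervalIntegral.integral_congr this]
          simp
        rw [hxu, hXu]; ring
      calc (∫ u in (0:ℝ)..t, (3 * x u + 2 * mu * ∫ v in (0:ℝ)..u, x v))
          = ∫ u in (0:ℝ)..t, (0:ℝ) := intervalIntegral.integral_congr this
        _ = 0 := by simp
    have e := heq t ht
    rw [hF, hIzero, hxt0] at e
    linarith [e]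
end

section
/- Let λ, μ, β > 0 with λ > 2μβ, set ρ = λ/μ, and for t ≥ 0 let Ψ(t) be the unique y ∈ [0, β) satisfying (1 − y/β)^{ρ/2} e^{y + μt} = 1. Then Ψ(0) = 0, Ψ is continuously differentiable and strictly increasing on [0,∞), 0 ≤ Ψ(t) < β for all t, and Ψ satisfies Ψ′(t) = 2μ²(β − Ψ(t)) / (λ − 2μ(β − Ψ(t))) for all t ≥ 0; equivalently, Ψ(t) = μ∫₀ᵗ 2μ(β − Ψ(u)) / (λ − 2μ(β − Ψ(u))) du for all t ≥ 0. -/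
/-!
Taking logarithms, the defining equation of `Ψ t` becomes `g (Ψ t) = -μ t` with
`g y = (ρ/2) log (1 - y/β) + y`. Since `g' y = 1 - ρ / (2 (β - y))` and `2β < ρ`, the function `g`
is strictly decreasing on `[0, β)`, so `Ψ` is the inverse of `g` along the ray `-μ t`: it is
strictly increasing onto `[0, β)`, hence continuous, and the inverse function rule gives
`Ψ' = -μ / g' (Ψ)`, which is the stated right-hand side. The integral form is the fundamental
theorem of calculus.
-/

open Real Set intervalIntegral

open Filter Topology

theorem HasDerivWithinAt.of_comp_left {𝕜 : Type*} [NontriviallyNormedField 𝕜] {f g h : 𝕜 → 𝕜}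
    {f' h' a : 𝕜} {s : Set 𝕜} (hg : ContinuousWithinAt g s a) (hf : HasDerivAt f f' (g a))
    (hh : HasDerivWithinAt h h' s a) (hf' : f' ≠ 0) (hcomp : f ∘ g =ᶠ[𝓝[s] a] h) (ha : a ∈ s) :
    HasDerivWithinAt g (h' / f') s a := by
  have hg' : Tendsto g (𝓝[s] a) (𝓝[univ] (g a)) := by rw [nhdsWithin_univ]; exact hg
  convert! (hf.hasFDerivAt.hasFDerivWithinAt (s := univ)).of_comp_of_leftInverse hg' hh hcomp
    (f'symm := .toSpanSingleton 𝕜 f'⁻¹) (fun _ ↦ by simp [hf']) ha |>.hasDerivWithinAt using 1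
  simp [div_eq_mul_inv]

theorem StrictMonoOn.continuousOn_Ici_of_image_eq_Ico {α β : Type*} [LinearOrder α]
    [TopologicalSpace α] [OrderTopology α] [LinearOrder β] [TopologicalSpace β] [OrderTopology β]
    [DenselyOrdered β] {f : α → β} {a : α} {b : β} (hf : StrictMonoOn f (Ici a))
    (himage : f '' Ici a = Ico (f a) b) : ContinuousOn f (Ici a) := by
  intro t ht
  have hfa : f a < b := (himage ▸ mem_image_of_mem f (self_mem_Ici (a := a))).2
  rcases (mem_Ici.1 ht).eq_or_lt with rfl | hat
  · refine hf.continuousWithinAt_right_of_image_mem_nhdsWithin self_mem_nhdsWithin ?_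
    rw [himage]
    exact Ico_mem_nhdsGE hfa
  · refine (hf.continuousAt_of_image_mem_nhds (Ici_mem_nhds hat) ?_).continuousWithinAt
    have hft : f t ∈ Ico (f a) b := himage ▸ mem_image_of_mem f ht
    rw [himage]
    exact Ico_mem_nhds (hf self_mem_Ici ht hat) hft.2

theorem integral_eq_sub_of_hasDerivWithinAt_Ici {f f' : ℝ → ℝ} {a b : ℝ} (hab : a ≤ b)
    (hf : ∀ x ∈ Ici a, HasDerivWithinAt f (f' x) (Ici a) x) (hf' : ContinuousOn f' (Ici a)) :
    ∫ x in a..b, f' x = f b - f a := by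
  refine integral_eq_sub_of_hasDerivAt_of_le hab
    (fun x hx ↦ (hf x hx.1).continuousWithinAt.mono Icc_subset_Ici_self)
    (fun x hx ↦ (hf x hx.1.le).hasDerivAt (Ici_mem_nhds hx.1))
    (hf'.mono ?_).intervalIntegrable
  rw [uIcc_of_le hab]
  exact Icc_subset_Ici_self

def IsLevelInverse (g : ℝ → ℝ) (mu beta : ℝ) (Psi : ℝ → ℝ) : Prop :=
  ∀ t, 0 ≤ t → Psi t ∈ Ico 0 beta ∧ g (Psi t) = -(mu * t)

namespace IsLevelInverse

variable {g Psi : ℝ → ℝ} {mu beta : ℝ}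

theorem apply_zero (h : IsLevelInverse g mu beta Psi) (hg : StrictAntiOn g (Ico 0 beta))
    (hg0 : g 0 = 0) : Psi 0 = 0 := by
  obtain ⟨hmem, hlevel⟩ := h 0 le_rfl
  exact hg.injOn hmem ⟨le_rfl, hmem.1.trans_lt hmem.2⟩ (by rw [hlevel, hg0, mul_zero, neg_zero])

theorem strictMonoOn (h : IsLevelInverse g mu beta Psi) (hg : StrictAntiOn g (Ico 0 beta))
    (hmu : 0 < mu) : StrictMonoOn Psi (Ici 0) := by
  intro s hs t ht hst
  refine (hg.lt_iff_gt (h t ht).1 (h s hs).1).1 ?_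
  rw [(h s hs).2, (h t ht).2]
  nlinarith

theorem image_Ici (h : IsLevelInverse g mu beta Psi) (hg : StrictAntiOn g (Ico 0 beta))
    (hg0 : g 0 = 0) (hmu : 0 < mu) : Psi '' Ici 0 = Ico 0 beta := by
  refine Subset.antisymm (image_subset_iff.2 fun t ht ↦ (h t ht).1) fun y hy ↦ ?_
  have hbeta : 0 < beta := hy.1.trans_lt hy.2
  have hgy : g y ≤ 0 := hg0 ▸ hg.antitoneOn ⟨le_rfl, hbeta⟩ hy hy.1
  have ht : 0 ≤ -g y / mu := div_nonneg (neg_nonneg.2 hgy) hmu.le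
  refine ⟨-g y / mu, ht, hg.injOn (h _ ht).1 hy ?_⟩
  rw [(h _ ht).2]
  field_simp

theorem continuousOn (h : IsLevelInverse g mu beta Psi) (hg : StrictAntiOn g (Ico 0 beta))
    (hg0 : g 0 = 0) (hmu : 0 < mu) : ContinuousOn Psi (Ici 0) :=
  (h.strictMonoOn hg hmu).continuousOn_Ici_of_image_eq_Ico
    (by rw [h.apply_zero hg hg0]; exact h.image_Ici hg hg0 hmu)

theorem hasDerivWithinAt (h : IsLevelInverse g mu beta Psi) (hPsi : ContinuousOn Psi (Ici 0))
    {t g' : ℝ} (ht : 0 ≤ t) (hg : HasDerivAt g g' (Psi t)) (hg' : g' ≠ 0) :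
    HasDerivWithinAt Psi (-mu / g') (Ici 0) t := by
  have hlin : HasDerivWithinAt (fun s ↦ -(mu * s)) (-(mu * 1)) (Ici 0) t :=
    ((hasDerivWithinAt_id t _).const_mul mu).neg
  rw [mul_one] at hlin
  refine HasDerivWithinAt.of_comp_left (hPsi t ht) hg hlin hg' ?_ ht
  filter_upwards [self_mem_nhdsWithin] with s hs using (h s hs).2

end IsLevelInverse

noncomputable def decayPotential (rho beta y : ℝ) : ℝ :=
  rho / 2 * log (1 - y / beta) + y

section decayPotential

variable {rho beta : ℝ}

theorem decayPotential_zero : decayPotential rho beta 0 = 0 := by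
  simp [decayPotential]

theorem decayPotential_eq_of_rpow_mul_exp_eq_one {mu t y : ℝ} (hbeta : 0 < beta) (hy : y < beta)
    (h : (1 - y / beta) ^ (rho / 2) * exp (y + mu * t) = 1) :
    decayPotential rho beta y = -(mu * t) := by
  have hpos : 0 < 1 - y / beta := sub_pos.2 ((div_lt_one hbeta).2 hy)
  have hlog := congrArg log h
  rw [log_mul (rpow_pos_of_pos hpos _).ne' (exp_ne_zero _), log_rpow hpos, log_exp,
    log_one] at hlog
  rw [decayPotential]
  linarith

theorem hasDerivAt_decayPotential {y : ℝ} (hbeta : 0 < beta) (hy : y < beta) :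
    HasDerivAt (decayPotential rho beta) (1 - rho / (2 * (beta - y))) y := by
  have hpos : 0 < 1 - y / beta := sub_pos.2 ((div_lt_one hbeta).2 hy)
  have hinner : HasDerivAt (fun y ↦ 1 - y / beta) (-(1 / beta)) y := by
    simpa using ((hasDerivAt_id y).div_const beta).const_sub 1
  refine (((hinner.log hpos.ne').const_mul (rho / 2)).add
    (hasDerivAt_id y)).congr_deriv ?_
  have : beta - y ≠ 0 := (sub_pos.2 hy).ne'
  rw [one_sub_div hbeta.ne']
  field_simp
  ring

theorem deriv_decayPotential_neg {y : ℝ} (hy : y < beta) (hrho : beta - rho / 2 < y) :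
    1 - rho / (2 * (beta - y)) < 0 := by
  rw [sub_neg, one_lt_div (by linarith)]
  linarith

theorem strictAntiOn_decayPotential (hbeta : 0 < beta) :
    StrictAntiOn (decayPotential rho beta) (Ico (beta - rho / 2) beta) := by
  refine strictAntiOn_of_deriv_neg (convex_Ico _ _)
    (fun y hy ↦ (hasDerivAt_decayPotential hbeta hy.2).continuousAt.continuousWithinAt)
    fun y hy ↦ ?_
  rw [interior_Ico] at hy
  rw [(hasDerivAt_decayPotential hbeta hy.2).deriv]
  exact deriv_decayPotential_neg hy.2 hy.1

theorem IsLevelInverse.hasDerivWithinAt_decayPotential {lam mu : ℝ} {Psi : ℝ → ℝ}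
    (h : IsLevelInverse (decayPotential (lam / mu) beta) mu beta Psi)
    (hPsi : ContinuousOn Psi (Ici 0)) (hmu : 0 < mu) (hbeta : 0 < beta)
    (hstable : 2 * mu * beta < lam) {t : ℝ} (ht : 0 ≤ t) :
    HasDerivWithinAt Psi
      (2 * mu ^ 2 * (beta - Psi t) / (lam - 2 * mu * (beta - Psi t))) (Ici 0) t := by
  obtain ⟨⟨hPsi_nonneg, hPsi_lt⟩, -⟩ := h t ht
  have hhalf : beta < lam / mu / 2 := by
    rw [div_div, lt_div_iff₀ (by positivity)]
    linarith
  have hrho : beta - lam / mu / 2 < Psi t := by linarith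
  convert h.hasDerivWithinAt hPsi ht (hasDerivAt_decayPotential hbeta hPsi_lt)
    (deriv_decayPotential_neg hPsi_lt hrho).ne using 1
  have hdenom : lam - 2 * mu * (beta - Psi t) ≠ 0 := by nlinarith
  have hdenom' : 2 * mu * (beta - Psi t) - lam ≠ 0 := by nlinarith
  have hgap : beta - Psi t ≠ 0 := (sub_pos.2 hPsi_lt).ne'
  field_simp
  ring

end decayPotential

theorem decay_function_ode_general
    (lam mu beta rho : ℝ) (hmu : 0 < mu) (hbeta : 0 < beta)
    (hstable : 2 * mu * beta < lam) (hrho : rho = lam / mu)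
    (Psi : ℝ → ℝ)
    (hPsi : ∀ t, 0 ≤ t → Psi t ∈ Set.Ico 0 beta ∧
      (1 - Psi t / beta) ^ (rho / 2) * Real.exp (Psi t + mu * t) = 1) :
    Psi 0 = 0 ∧
    StrictMonoOn Psi (Set.Ici 0) ∧
    (∀ t, 0 ≤ t → 0 ≤ Psi t ∧ Psi t < beta) ∧
    (∀ t, 0 ≤ t → HasDerivWithinAt Psi
      (2 * mu ^ 2 * (beta - Psi t) / (lam - 2 * mu * (beta - Psi t))) (Set.Ici 0) t) ∧
    ContinuousOn
      (fun t => 2 * mu ^ 2 * (beta - Psi t) / (lam - 2 * mu * (beta - Psi t)))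
      (Set.Ici 0) ∧
    (∀ t, 0 ≤ t → Psi t =
      mu * ∫ u in (0:ℝ)..t,
        2 * mu * (beta - Psi u) / (lam - 2 * mu * (beta - Psi u))) := by
  subst hrho
  have hlevel : IsLevelInverse (decayPotential (lam / mu) beta) mu beta Psi := fun t ht ↦
    ⟨(hPsi t ht).1, decayPotential_eq_of_rpow_mul_exp_eq_one hbeta (hPsi t ht).1.2 (hPsi t ht).2⟩
  have hanti : StrictAntiOn (decayPotential (lam / mu) beta) (Ico 0 beta) := by
    refine (strictAntiOn_decayPotential hbeta).mono (Ico_subset_Ico_left ?_)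
    rw [sub_nonpos, div_div, le_div_iff₀ (by positivity)]
    linarith
  have hPsi0 : Psi 0 = 0 := hlevel.apply_zero hanti decayPotential_zero
  have hcont : ContinuousOn Psi (Ici 0) := hlevel.continuousOn hanti decayPotential_zero hmu
  have hderiv := fun t (ht : 0 ≤ t) ↦
    hlevel.hasDerivWithinAt_decayPotential hcont hmu hbeta hstable ht
  have hrhs : ContinuousOn
      (fun t => 2 * mu ^ 2 * (beta - Psi t) / (lam - 2 * mu * (beta - Psi t))) (Ici 0) :=
    (continuousOn_const.mul (continuousOn_const.sub hcont)).div
      (continuousOn_const.sub (continuousOn_const.mul (continuousOn_const.sub hcont)))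
      fun t ht ↦ by nlinarith [(hPsi t ht).1.1]
  refine ⟨hPsi0, hlevel.strictMonoOn hanti hmu, fun t ht ↦ (hPsi t ht).1, hderiv, hrhs,
    fun t ht ↦ ?_⟩
  calc Psi t = Psi t - Psi 0 := by rw [hPsi0, sub_zero]
    _ = ∫ u in (0:ℝ)..t, 2 * mu ^ 2 * (beta - Psi u) / (lam - 2 * mu * (beta - Psi u)) :=
      (integral_eq_sub_of_hasDerivWithinAt_Ici ht hderiv hrhs).symm
    _ = _ := by
      rw [← integral_const_mul]
      exact integral_congr fun u _ ↦ by ring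

theorem decay_function_ode
    (lam mu beta rho : ℝ) (hlam : 0 < lam) (hmu : 0 < mu) (hbeta : 0 < beta)
    (hstable : 2 * mu * beta < lam) (hrho : rho = lam / mu)
    (Psi : ℝ → ℝ)
    (hPsi : ∀ t, 0 ≤ t → Psi t ∈ Set.Ico 0 beta ∧
      (1 - Psi t / beta) ^ (rho / 2) * Real.exp (Psi t + mu * t) = 1) :
    Psi 0 = 0 ∧
    StrictMonoOn Psi (Set.Ici 0) ∧
    (∀ t, 0 ≤ t → 0 ≤ Psi t ∧ Psi t < beta) ∧
    (∀ t, 0 ≤ t → HasDerivWithinAt Psi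
      (2 * mu ^ 2 * (beta - Psi t) / (lam - 2 * mu * (beta - Psi t))) (Set.Ici 0) t) ∧
    ContinuousOn
      (fun t => 2 * mu ^ 2 * (beta - Psi t) / (lam - 2 * mu * (beta - Psi t)))
      (Set.Ici 0) ∧
    (∀ t, 0 ≤ t → Psi t =
      mu * ∫ u in (0:ℝ)..t,
        2 * mu * (beta - Psi u) / (lam - 2 * mu * (beta - Psi u))) :=
  decay_function_ode_general lam mu beta rho hmu hbeta hstable hrho Psi hPsi
end

section
/- Let λ, μ, β > 0 with λ > 2μβ, set ρ = λ/μ, and for t ≥ 0 let Ψ(t) be the unique y ∈ [0, β) satisfying (1 − y/β)^{ρ/2} e^{y + μt} = 1. Then Ψ(t) → β as t → ∞, and moreover lim_{t→∞} (β − Ψ(t)) · e^{2(β + μt)/ρ} = β; in other words Ψ(t) ∼ β − β·exp(−2(β + μt)/ρ) as t → ∞. -/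
open Real Set Filter

theorem decay_function_asymptotics
    (lam mu beta rho : ℝ) (hlam : 0 < lam) (hmu : 0 < mu) (hbeta : 0 < beta)
    (hstable : 2 * mu * beta < lam) (hrho : rho = lam / mu)
    (Psi : ℝ → ℝ)
    (hPsi : ∀ t, 0 ≤ t → Psi t ∈ Set.Ico 0 beta ∧
      (1 - Psi t / beta) ^ (rho / 2) * Real.exp (Psi t + mu * t) = 1) :
    Filter.Tendsto Psi Filter.atTop (nhds beta) ∧
    Filter.Tendsto (fun t => (beta - Psi t) * Real.exp (2 * (beta + mu * t) / rho))
      Filter.atTop (nhds beta) := by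
  have hrho_pos : 0 < rho := by
    rw [hrho]; positivity
  -- key identity
  have key : ∀ t, 0 ≤ t → beta - Psi t = beta * Real.exp (-(2 * (Psi t + mu * t) / rho)) := by
    intro t ht
    obtain ⟨⟨h0, h1⟩, heq⟩ := hPsi t ht
    have hx : 0 < 1 - Psi t / beta := by
      have : Psi t / beta < 1 := (div_lt_one hbeta).mpr h1
      linarith
    have hxe : (1 - Psi t / beta) ^ (rho / 2) = Real.exp (-(Psi t + mu * t)) := by
      rw [Real.exp_neg]
      exact eq_inv_of_mul_eq_one_left heq
    have hexp1 : (rho / 2) * (2 / rho) = 1 := by field_simp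
    have h2 : 1 - Psi t / beta = Real.exp (-(Psi t + mu * t) * (2 / rho)) := by
      calc 1 - Psi t / beta = (1 - Psi t / beta) ^ ((1:ℝ)) := (Real.rpow_one _).symm
        _ = (1 - Psi t / beta) ^ ((rho / 2) * (2 / rho)) := by rw [hexp1]
        _ = ((1 - Psi t / beta) ^ (rho / 2)) ^ ((2:ℝ) / rho) := Real.rpow_mul hx.le _ _
        _ = Real.exp (-(Psi t + mu * t)) ^ ((2:ℝ) / rho) := by rw [hxe]
        _ = Real.exp (-(Psi t + mu * t) * (2 / rho)) := by
            rw [Real.rpow_def_of_pos (Real.exp_pos _), Real.log_exp]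
    have h3 : -(Psi t + mu * t) * (2 / rho) = -(2 * (Psi t + mu * t) / rho) := by ring
    rw [h3] at h2
    have := congrArg (fun x => beta * x) h2
    simp only [mul_sub, mul_one, mul_div_cancel₀ _ hbeta.ne'] at this
    linarith [this]
  -- exp (-(2*(mu*t)/rho)) → 0
  have hexp0 : Tendsto (fun t : ℝ => Real.exp (-(2 * (mu * t) / rho))) atTop (nhds 0) := by
    have hdiv : Tendsto (fun t : ℝ => 2 * (mu * t) / rho) atTop atTop := by
      apply Tendsto.atTop_div_const hrho_pos
      exact Tendsto.const_mul_atTop (by positivity) (tendsto_id.const_mul_atTop hmu)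
    exact Real.tendsto_exp_atBot.comp (tendsto_neg_atTop_atBot.comp hdiv)
  -- first limit
  have h1 : Tendsto Psi atTop (nhds beta) := by
    apply tendsto_of_tendsto_of_tendsto_of_le_of_le'
      (g := fun t => beta - beta * Real.exp (-(2 * (mu * t) / rho))) (h := fun _ => beta)
    · have := (tendsto_const_nhds (x := beta) (f := atTop)).sub (hexp0.const_mul beta)
      simpa using this
    · exact tendsto_const_nhds
    · filter_upwards [eventually_ge_atTop (0:ℝ)] with t ht
      have hk := key t ht
      have h0 := (hPsi t ht).1.1
      have hle : Real.exp (-(2 * (Psi t + mu * t) / rho)) ≤ Real.exp (-(2 * (mu * t) / rho)) := by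
        apply Real.exp_le_exp.mpr
        have : 2 * (mu * t) / rho ≤ 2 * (Psi t + mu * t) / rho := by
          gcongr
          linarith
        linarith
      nlinarith [mul_le_mul_of_nonneg_left hle hbeta.le]
    · filter_upwards [eventually_ge_atTop (0:ℝ)] with t ht
      exact ((hPsi t ht).1.2).le
  refine ⟨h1, ?_⟩
  have h2 : Tendsto (fun t => beta * Real.exp (2 * (beta - Psi t) / rho)) atTop (nhds beta) := by
    have hz : Tendsto (fun t => 2 * (beta - Psi t) / rho) atTop (nhds 0) := by
      have := ((tendsto_const_nhds (x := beta) (f := atTop)).sub h1).const_mul 2 |>.div_const rho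
      simpa using this
    have := (Real.continuous_exp.tendsto 0).comp hz
    simp only [Function.comp, Real.exp_zero] at this
    simpa using (tendsto_const_nhds (x := beta) (f := atTop)).mul this
  refine h2.congr' ?_
  filter_upwards [eventually_ge_atTop (0:ℝ)] with t ht
  conv_rhs => rw [key t ht]
  rw [mul_assoc, ← Real.exp_add]
  congr 1
  field_simp
  ring
end

section
/- Let G be a map sending continuous functions [0,∞) → ℝ to continuous functions [0,∞) → ℝ such that G(x)(0) ≥ 0 for all x and such that for every T > 0 there exists a constant C_T with sup_{0≤s≤t} |G(x)(s) − G(y)(s)| ≤ C_T ∫₀ᵗ |x(u) − y(u)| du for all continuous x, y and all 0 ≤ t ≤ T. Then there exists a unique pair (X, R) of continuous functions on [0,∞) that is a solution of the generalized Skorokhod problem associated with G. -/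
open Real Set intervalIntegral

/-!
For a single continuous `z` with `z 0 ≥ 0`, the Skorokhod problem has the explicit solution with
regulator `r t = sup_{s ≤ t} (-z s)⁺`, and every solution has this regulator; moreover
`Γ z = z + r` is 2-Lipschitz for the sup norm on `[0, t]`. So `(x, r)` solves the generalized
problem iff `x` is a fixed point of `Φ x = Γ (G x)`, and `Φ` satisfies the Volterra-type bound
`|Φ x s - Φ y s| ≤ K ∫₀ˢ |x - y|`. For such an operator the Picard iterates obey factorial bounds
`M (K s)ⁿ / n!`, hence converge locally uniformly to a fixed point, and the same bound applied to
two fixed points (Gronwall) shows that they agree.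
-/

open MeasureTheory Filter Topology

lemma ContinuousOn.eq_of_forall_Ioc_eq {β : Type*} [TopologicalSpace β] [T1Space β]
    {f : ℝ → β} {a b : ℝ} {c : β} (hf : ContinuousOn f (Icc a b)) (hab : a < b)
    (h : ∀ u ∈ Ioc a b, f u = c) : f a = c := by
  have hclosed := hf.preimage_isClosed_of_isClosed isClosed_Icc (isClosed_singleton (x := c))
  have hsub : closure (Ioc a b) ⊆ Icc a b ∩ f ⁻¹' {c} :=
    hclosed.closure_subset_iff.2 fun u hu => ⟨Ioc_subset_Icc_self hu, h u hu⟩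
  rw [closure_Ioc hab.ne] at hsub
  exact (hsub (left_mem_Icc.2 hab.le)).2

lemma continuousOn_Ici_of_forall_Icc {β : Type*} [TopologicalSpace β] {f : ℝ → β} {a : ℝ}
    (h : ∀ T, a < T → ContinuousOn f (Icc a T)) : ContinuousOn f (Ici a) :=
  continuousOn_of_locally_continuousOn fun t (ht : a ≤ t) =>
    ⟨Iio (t + 1), isOpen_Iio, by simp, (h (t + 1) (by linarith)).mono fun _ hu =>
      ⟨hu.1, (mem_Iio.1 hu.2).le⟩⟩

lemma le_pow_div_factorial_of_le_integral {d : ℕ → ℝ → ℝ} {T K M : ℝ} (hK : 0 ≤ K)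
    (hd : ∀ n, ContinuousOn (d n) (Icc 0 T)) (h0 : ∀ s ∈ Icc 0 T, d 0 s ≤ M)
    (hsucc : ∀ n, ∀ s ∈ Icc 0 T, d (n + 1) s ≤ K * ∫ u in (0:ℝ)..s, d n u) (n : ℕ) :
    ∀ s ∈ Icc 0 T, d n s ≤ M * (K * s) ^ n / n.factorial := by
  induction n with
  | zero => simpa using h0
  | succ n ih =>
    intro s hs
    set c := M * K ^ n / n.factorial
    have hc : ∀ u, M * (K * u) ^ n / n.factorial = c * u ^ n := fun u => by ring
    have hint : IntervalIntegrable (d n) volume 0 s :=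
      ((hd n).mono (Icc_subset_Icc_right hs.2)).intervalIntegrable_of_Icc hs.1
    have hbound : ∫ u in (0:ℝ)..s, d n u ≤ ∫ u in (0:ℝ)..s, c * u ^ n :=
      intervalIntegral.integral_mono_on hs.1 hint
        ((continuous_pow n).const_mul c |>.intervalIntegrable _ _) fun u hu =>
          hc u ▸ ih u ⟨hu.1, hu.2.trans hs.2⟩
    calc d (n + 1) s ≤ K * ∫ u in (0:ℝ)..s, d n u := hsucc n s hs
      _ ≤ K * ∫ u in (0:ℝ)..s, c * u ^ n := mul_le_mul_of_nonneg_left hbound hK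
      _ = M * (K * s) ^ (n + 1) / (n + 1).factorial := by
        rw [intervalIntegral.integral_const_mul, integral_pow, Nat.factorial_succ]
        simp only [c]
        push_cast
        field_simp
        ring

noncomputable def skorokhodRegulator (z : ℝ → ℝ) (t : ℝ) : ℝ :=
  sSup ((fun s => max (-z s) 0) '' Icc 0 t)

noncomputable def skorokhodMap (z : ℝ → ℝ) (t : ℝ) : ℝ :=
  z t + skorokhodRegulator z t

section SkorokhodRegulator

variable {z : ℝ → ℝ} {s t : ℝ}

lemma bddAbove_skorokhodRegulator_image (hz : ContinuousOn z (Ici 0)) :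
    BddAbove ((fun s => max (-z s) 0) '' Icc 0 t) :=
  isCompact_Icc.bddAbove_image
    ((ContinuousOn.sup hz.neg continuousOn_const).mono Icc_subset_Ici_self)

lemma le_skorokhodRegulator (hz : ContinuousOn z (Ici 0)) (hs : s ∈ Icc 0 t) :
    max (-z s) 0 ≤ skorokhodRegulator z t :=
  le_csSup (bddAbove_skorokhodRegulator_image hz) (mem_image_of_mem _ hs)

lemma skorokhodRegulator_le {a : ℝ} (ht : 0 ≤ t) (h : ∀ s ∈ Icc 0 t, max (-z s) 0 ≤ a) :
    skorokhodRegulator z t ≤ a :=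
  csSup_le ((nonempty_Icc.2 ht).image _) (forall_mem_image.2 h)

lemma skorokhodRegulator_nonneg (hz : ContinuousOn z (Ici 0)) (ht : 0 ≤ t) :
    0 ≤ skorokhodRegulator z t :=
  (le_max_right _ _).trans (le_skorokhodRegulator hz ⟨le_rfl, ht⟩)

lemma skorokhodRegulator_mono (hz : ContinuousOn z (Ici 0)) (hs : 0 ≤ s) (hst : s ≤ t) :
    skorokhodRegulator z s ≤ skorokhodRegulator z t :=
  skorokhodRegulator_le hs fun _ hu => le_skorokhodRegulator hz ⟨hu.1, hu.2.trans hst⟩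

lemma skorokhodRegulator_zero (hz0 : 0 ≤ z 0) : skorokhodRegulator z 0 = 0 := by
  simp [skorokhodRegulator, hz0]

lemma skorokhodMap_nonneg (hz : ContinuousOn z (Ici 0)) (ht : 0 ≤ t) :
    0 ≤ skorokhodMap z t := by
  have := (le_max_left _ _).trans (le_skorokhodRegulator hz ⟨ht, le_rfl⟩)
  unfold skorokhodMap
  linarith

lemma exists_skorokhodRegulator_eq (hz : ContinuousOn z (Ici 0)) (ht : 0 ≤ t) :
    ∃ u ∈ Icc 0 t, skorokhodRegulator z t = max (-z u) 0 := by
  obtain ⟨u, hu, hmax⟩ := isCompact_Icc.exists_isMaxOn (nonempty_Icc.2 ht)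
    ((ContinuousOn.sup hz.neg continuousOn_const).mono Icc_subset_Ici_self)
  exact ⟨u, hu, (skorokhodRegulator_le ht fun _ hv => hmax hv).antisymm
    (le_skorokhodRegulator hz hu)⟩

lemma skorokhodRegulator_congr {z' : ℝ → ℝ} (h : EqOn z z' (Icc 0 t)) :
    skorokhodRegulator z t = skorokhodRegulator z' t := by
  unfold skorokhodRegulator
  rw [image_congr fun _ hu => by rw [h hu]]

lemma skorokhodRegulator_le_add {z' : ℝ → ℝ} (hz' : ContinuousOn z' (Ici 0)) {ε : ℝ}
    (ht : 0 ≤ t) (h : ∀ u ∈ Icc 0 t, |z u - z' u| ≤ ε) :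
    skorokhodRegulator z t ≤ skorokhodRegulator z' t + ε :=
  skorokhodRegulator_le ht fun u hu => by
    have h₁ := (le_abs_self _).trans (abs_max_sub_max_le_abs (-z u) (-z' u) 0)
    have h₂ := h u hu
    rw [show -z u - -z' u = z' u - z u by ring, abs_sub_comm] at h₁
    linarith [le_skorokhodRegulator hz' hu]

lemma abs_skorokhodRegulator_sub_le {z' : ℝ → ℝ} (hz : ContinuousOn z (Ici 0))
    (hz' : ContinuousOn z' (Ici 0)) {ε : ℝ} (ht : 0 ≤ t) (h : ∀ u ∈ Icc 0 t, |z u - z' u| ≤ ε) :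
    |skorokhodRegulator z t - skorokhodRegulator z' t| ≤ ε := by
  have h₁ := skorokhodRegulator_le_add hz' ht h
  have h₂ := skorokhodRegulator_le_add hz ht fun u hu => abs_sub_comm (z u) (z' u) ▸ h u hu
  exact abs_sub_le_iff.2 ⟨by linarith, by linarith⟩

lemma abs_skorokhodMap_sub_le {z' : ℝ → ℝ} (hz : ContinuousOn z (Ici 0))
    (hz' : ContinuousOn z' (Ici 0)) {ε : ℝ} (ht : 0 ≤ t) (h : ∀ u ∈ Icc 0 t, |z u - z' u| ≤ ε) :
    |skorokhodMap z t - skorokhodMap z' t| ≤ 2 * ε :=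
  calc |skorokhodMap z t - skorokhodMap z' t|
      = |(z t - z' t) + (skorokhodRegulator z t - skorokhodRegulator z' t)| := by
        unfold skorokhodMap; ring_nf
    _ ≤ |z t - z' t| + |skorokhodRegulator z t - skorokhodRegulator z' t| := abs_add_le _ _
    _ ≤ 2 * ε := by
        linarith [h t ⟨ht, le_rfl⟩, abs_skorokhodRegulator_sub_le hz hz' ht h]

/-- The running maximum over `[0, t]` is the maximum over `s ∈ [0, 1]` of the value at `s * t`,
which is jointly continuous once `z` is extended to `ℝ` by `z ∘ max 0`. -/
lemma ContinuousOn.skorokhodRegulator (hz : ContinuousOn z (Ici 0)) :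
    ContinuousOn (skorokhodRegulator z) (Ici 0) := by
  set g : ℝ → ℝ := fun u => max (-z (max u 0)) 0
  have hg : Continuous g := ((hz.comp_continuous (continuous_id.max continuous_const)
    fun u => le_max_right u 0).neg).max continuous_const
  have hsup : Continuous fun t => sSup ((fun s => g (s * t)) '' Icc 0 1) :=
    isCompact_Icc.continuous_sSup (hg.comp (continuous_snd.mul continuous_fst))
  refine hsup.continuousOn.congr fun t (ht : 0 ≤ t) => ?_
  dsimp only
  rw [← image_image g (· * t), image_mul_right_Icc zero_le_one ht, zero_mul, one_mul]
  exact congrArg sSup (image_congr fun u hu => by simp only [g, max_eq_left hu.1])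

end SkorokhodRegulator

lemma ContinuousOn.skorokhodMap {z : ℝ → ℝ} (hz : ContinuousOn z (Ici 0)) :
    ContinuousOn (skorokhodMap z) (Ici 0) :=
  hz.add hz.skorokhodRegulator

lemma IsSkorokhodSolution.congr {z x x' r : ℝ → ℝ} (h : IsSkorokhodSolution z x r)
    (hx : EqOn x x' (Ici 0)) : IsSkorokhodSolution z x' r := by
  obtain ⟨hxc, hrc, hxzr, hxnn, hrmono, hr0, hcompl⟩ := h
  refine ⟨hxc.congr hx.symm, hrc, fun t ht => hx ht ▸ hxzr t ht,
    fun t ht => hx ht ▸ hxnn t ht, hrmono, hr0, fun s t hs hst hpos => ?_⟩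
  exact hcompl s t hs hst fun u hu => hx (hs.trans hu.1 : 0 ≤ u) ▸ hpos u hu

section SkorokhodProblem

variable {z : ℝ → ℝ}

/-- At a time `u` where the running maximum of `(-z)⁺` up to `t` is attained, either that maximum
is `0` or `skorokhodMap z u = 0`; so the regulator can only grow while the path sits at `0`. -/
lemma isSkorokhodSolution_skorokhodMap (hz : ContinuousOn z (Ici 0)) (hz0 : 0 ≤ z 0) :
    IsSkorokhodSolution z (skorokhodMap z) (skorokhodRegulator z) := by
  refine ⟨hz.skorokhodMap, hz.skorokhodRegulator, fun t _ => rfl,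
    fun t ht => skorokhodMap_nonneg hz ht, fun s hs t _ hst => skorokhodRegulator_mono hz hs hst,
    skorokhodRegulator_zero hz0, fun s t hs hst hpos => ?_⟩
  refine (skorokhodRegulator_mono hz hs hst).antisymm ?_
  obtain ⟨u, hu, hmax⟩ := exists_skorokhodRegulator_eq hz (hs.trans hst)
  rcases le_or_gt u s with hus | hsu
  · exact hmax ▸ le_skorokhodRegulator hz ⟨hu.1, hus⟩
  · have hxu : 0 < z u + skorokhodRegulator z u := hpos u ⟨hsu.le, hu.2⟩
    have hut : skorokhodRegulator z u ≤ skorokhodRegulator z t :=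
      skorokhodRegulator_mono hz hu.1 hu.2
    have hneg : max (-z u) 0 = 0 := max_eq_right <| not_lt.1 fun hzu => by
      rw [max_eq_left hzu.le] at hmax
      linarith
    rw [hmax, hneg]
    exact skorokhodRegulator_nonneg hz hs

/-- If `r t` exceeded `m`, the running maximum of `(-z)⁺`,
then `x > 0` after the last time `s₁ ≤ t` with `r s₁ ≤ m`, so `r` would be constant on `[s₁, t]`. -/
lemma IsSkorokhodSolution.eqOn_skorokhodRegulator {x r : ℝ → ℝ} (hz : ContinuousOn z (Ici 0))
    (h : IsSkorokhodSolution z x r) : EqOn r (skorokhodRegulator z) (Ici 0) := by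
  obtain ⟨-, hrc, hxzr, hxnn, hrmono, hr0, hcompl⟩ := h
  intro t (ht : 0 ≤ t)
  set m := skorokhodRegulator z t
  have hrnn : ∀ u, 0 ≤ u → 0 ≤ r u := fun u hu => hr0 ▸ hrmono (mem_Ici.2 le_rfl) hu hu
  refine le_antisymm ?_ (skorokhodRegulator_le ht fun u hu => ?_)
  · set S := Icc 0 t ∩ r ⁻¹' Iic m
    have hS : IsCompact S := isCompact_Icc.of_isClosed_subset
      ((hrc.mono Icc_subset_Ici_self).preimage_isClosed_of_isClosed isClosed_Icc isClosed_Iic)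
      inter_subset_left
    have hS₀ : (0 : ℝ) ∈ S := ⟨⟨le_rfl, ht⟩, show r 0 ≤ m by
      rw [hr0]; exact skorokhodRegulator_nonneg hz ht⟩
    obtain ⟨⟨⟨hs₁, hs₁t⟩, hrs₁⟩, hS₁⟩ := hS.isGreatest_sSup ⟨0, hS₀⟩
    rcases hs₁t.eq_or_lt with heq | hlt
    · exact heq ▸ hrs₁
    have hpos : ∀ u ∈ Ioc (sSup S) t, 0 < x u := fun u hu => by
      have hu₀ : 0 ≤ u := hs₁.trans hu.1.le
      have hmu : m < r u := not_le.1 fun hle => (hS₁ ⟨⟨hu₀, hu.2⟩, hle⟩).not_gt hu.1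
      have := (le_max_left _ _).trans (le_skorokhodRegulator hz ⟨hu₀, hu.2⟩)
      linarith [hxzr u hu₀]
    have hconst : ∀ u ∈ Ioc (sSup S) t, r u = r t := fun u hu =>
      hcompl u t (hs₁.trans hu.1.le) hu.2 fun v hv => hpos v ⟨hu.1.trans_le hv.1, hv.2⟩
    have hrs₁t : r (sSup S) = r t :=
      (hrc.mono (Icc_subset_Ici_iff hlt.le |>.2 hs₁)).eq_of_forall_Ioc_eq hlt hconst
    exact hrs₁t ▸ hrs₁
  · have hrut : r u ≤ r t := hrmono hu.1 ht hu.2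
    exact max_le (by linarith [hxzr u hu.1, hxnn u hu.1]) ((hrnn u hu.1).trans hrut)

end SkorokhodProblem

def VolterraLipschitz (Φ : (ℝ → ℝ) → ℝ → ℝ) : Prop :=
  ∀ T, 0 < T → ∃ K, 0 ≤ K ∧ ∀ x y : ℝ → ℝ, ContinuousOn x (Ici 0) → ContinuousOn y (Ici 0) →
    ∀ s ∈ Icc 0 T, |Φ x s - Φ y s| ≤ K * ∫ u in (0:ℝ)..s, |x u - y u|

namespace VolterraLipschitz

variable {Φ : (ℝ → ℝ) → ℝ → ℝ} (hΦ : VolterraLipschitz Φ)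
  (hΦc : ∀ x, ContinuousOn x (Ici 0) → ContinuousOn (Φ x) (Ici 0))

include hΦc in
lemma continuousOn_iterate {x : ℝ → ℝ} (hx : ContinuousOn x (Ici 0)) (n : ℕ) :
    ContinuousOn (Φ^[n] x) (Ici 0) := by
  induction n with
  | zero => exact hx
  | succ n ih => rw [Function.iterate_succ_apply']; exact hΦc _ ih

include hΦ in
lemma eqOn_of_fixedPoints {x y : ℝ → ℝ} (hx : ContinuousOn x (Ici 0))
    (hy : ContinuousOn y (Ici 0)) (hxΦ : EqOn (Φ x) x (Ici 0)) (hyΦ : EqOn (Φ y) y (Ici 0)) :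
    EqOn x y (Ici 0) := by
  intro t (ht : 0 ≤ t)
  obtain ⟨K, hK, hlip⟩ := hΦ (t + 1) (by linarith)
  have hd : ContinuousOn (fun s => |x s - y s|) (Icc 0 (t + 1)) :=
    (hx.sub hy).abs.mono Icc_subset_Ici_self
  obtain ⟨M, hM⟩ := isCompact_Icc.exists_bound_of_continuousOn hd
  have hbound := le_pow_div_factorial_of_le_integral (d := fun _ s => |x s - y s|) hK
    (fun _ => hd) (fun s hs => (le_abs_self _).trans (hM s hs)) (fun _ s hs => by
      simpa only [hxΦ (hs.1 : 0 ≤ s), hyΦ (hs.1 : 0 ≤ s)] using hlip x y hx hy s hs)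
  have hlim : Tendsto (fun n : ℕ => M * (K * t) ^ n / n.factorial) atTop (𝓝 0) := by
    simpa [mul_div_assoc] using (FloorSemiring.tendsto_pow_div_factorial_atTop (K * t)).const_mul M
  have hle : |x t - y t| ≤ 0 :=
    ge_of_tendsto hlim (Eventually.of_forall fun n => hbound n t ⟨ht, by linarith⟩)
  exact sub_eq_zero.1 (abs_nonpos_iff.1 hle)

include hΦ hΦc in
lemma exists_summable_bound_iterate_sub {T : ℝ} (hT : 0 < T) : ∃ a : ℕ → ℝ, Summable a ∧
    ∀ n, ∀ s ∈ Icc 0 T, ‖Φ^[n + 1] 0 s - Φ^[n] 0 s‖ ≤ a n := by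
  obtain ⟨K, hK, hlip⟩ := hΦ T hT
  have h0 : ContinuousOn (0 : ℝ → ℝ) (Ici 0) := continuousOn_const
  have hd : ∀ n, ContinuousOn (fun s => |Φ^[n + 1] 0 s - Φ^[n] 0 s|) (Icc 0 T) := fun n =>
    ((continuousOn_iterate hΦc h0 _).sub (continuousOn_iterate hΦc h0 _)).abs.mono
      Icc_subset_Ici_self
  obtain ⟨M, hM⟩ := isCompact_Icc.exists_bound_of_continuousOn (hd 0)
  have hbound := le_pow_div_factorial_of_le_integral hK hd
    (fun s hs => (le_abs_self _).trans (hM s hs)) fun n s hs => by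
      have := hlip _ _ (continuousOn_iterate hΦc h0 (n + 1)) (continuousOn_iterate hΦc h0 n) s hs
      rwa [← Function.iterate_succ_apply' Φ (n + 1), ← Function.iterate_succ_apply' Φ n] at this
  refine ⟨fun n => M * (K * T) ^ n / n.factorial, ?_, fun n s hs => ?_⟩
  · simpa [mul_div_assoc] using (Real.summable_pow_div_factorial (K * T)).mul_left M
  · refine (hbound n s hs).trans ?_
    have hM0 : 0 ≤ M := (abs_nonneg _).trans (hM 0 ⟨le_rfl, hT.le⟩)
    dsimp only
    gcongr
    exacts [mul_nonneg hK hs.1, hs.2]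

include hΦ hΦc in
lemma exists_tendstoUniformlyOn_iterate : ∃ X : ℝ → ℝ, ∀ T, 0 < T →
    TendstoUniformlyOn (fun n => Φ^[n] 0) X atTop (Icc 0 T) := by
  refine ⟨fun s => ∑' n, (Φ^[n + 1] 0 s - Φ^[n] 0 s), fun T hT => ?_⟩
  obtain ⟨a, ha, hbound⟩ := exists_summable_bound_iterate_sub hΦ hΦc hT
  refine (tendstoUniformlyOn_tsum_nat ha fun n s hs => hbound n s hs).congr ?_
  refine Eventually.of_forall fun N s _ => ?_
  simp only [Finset.sum_range_sub (fun n => Φ^[n] 0 s), Function.iterate_zero_apply, Pi.zero_apply,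
    sub_zero]

include hΦ in
lemma tendsto_apply_of_tendstoUniformlyOn {x : ℕ → ℝ → ℝ} {X : ℝ → ℝ} {T : ℝ} (hT : 0 < T)
    (hx : ∀ n, ContinuousOn (x n) (Ici 0)) (hX : ContinuousOn X (Ici 0))
    (hxX : TendstoUniformlyOn x X atTop (Icc 0 T)) {t : ℝ} (ht : t ∈ Icc 0 T) :
    Tendsto (fun n => Φ (x n) t) atTop (𝓝 (Φ X t)) := by
  obtain ⟨K, -, hlip⟩ := hΦ T hT
  have hdist : TendstoUniformlyOn (fun n s => |x n s - X s|) 0 atTop (uIcc 0 t) := by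
    rw [uIcc_of_le ht.1]
    refine Metric.tendstoUniformlyOn_iff.2 fun ε hε => ?_
    filter_upwards [Metric.tendstoUniformlyOn_iff.1 hxX ε hε] with n hn s hs
    simpa [Real.dist_eq, abs_sub_comm] using hn s ⟨hs.1, hs.2.trans ht.2⟩
  have hint := hdist.tendsto_intervalIntegral_of_continuousOn (μ := volume)
    (Eventually.of_forall fun n => by
      rw [uIcc_of_le ht.1]; exact ((hx n).sub hX).abs.mono Icc_subset_Ici_self)
  rw [tendsto_iff_dist_tendsto_zero]
  refine squeeze_zero (fun _ => dist_nonneg) (fun n => hlip _ _ (hx n) hX t ht) ?_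
  simpa using hint.const_mul K

include hΦ hΦc in
lemma exists_fixedPoint : ∃ X, ContinuousOn X (Ici 0) ∧ EqOn (Φ X) X (Ici 0) := by
  obtain ⟨X, hX⟩ := exists_tendstoUniformlyOn_iterate hΦ hΦc
  have hxc := continuousOn_iterate hΦc (x := 0) continuousOn_const
  have hXc : ContinuousOn X (Ici 0) := continuousOn_Ici_of_forall_Icc fun T hT =>
    (hX T hT).continuousOn (Frequently.of_forall fun n => (hxc n).mono Icc_subset_Ici_self)
  refine ⟨X, hXc, fun t (ht : 0 ≤ t) => tendsto_nhds_unique ?_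
    (((hX (t + 1) (by linarith)).tendsto_at ⟨ht, by linarith⟩).comp (tendsto_add_atTop_nat 1))⟩
  simpa only [Function.comp_def, Function.iterate_succ_apply'] using
    tendsto_apply_of_tendstoUniformlyOn hΦ (by linarith) hxc hXc (hX (t + 1) (by linarith))
      ⟨ht, by linarith⟩

end VolterraLipschitz

section GeneralizedSkorokhod

variable {G : (ℝ → ℝ) → (ℝ → ℝ)}
  (hGlip : ∀ T : ℝ, 0 < T → ∃ C : ℝ,
      ∀ x y : ℝ → ℝ, ContinuousOn x (Ici 0) → ContinuousOn y (Ici 0) →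
        ∀ t, 0 ≤ t → t ≤ T → ∀ s ∈ Icc (0:ℝ) t,
          |G x s - G y s| ≤ C * ∫ u in (0:ℝ)..t, |x u - y u|)

include hGlip in
lemma volterraLipschitz_skorokhodMap_comp
    (hGcont : ∀ x : ℝ → ℝ, ContinuousOn x (Ici 0) → ContinuousOn (G x) (Ici 0)) :
    VolterraLipschitz fun x => skorokhodMap (G x) := by
  intro T hT
  obtain ⟨C, hC⟩ := hGlip T hT
  refine ⟨2 * max C 0, by positivity, fun x y hx hy s hs => ?_⟩
  have hI : 0 ≤ ∫ u in (0:ℝ)..s, |x u - y u| :=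
    intervalIntegral.integral_nonneg hs.1 fun _ _ => abs_nonneg _
  rw [mul_assoc]
  exact abs_skorokhodMap_sub_le (hGcont x hx) (hGcont y hy) hs.1 fun u hu =>
    (hC x y hx hy s hs.1 hs.2 u hu).trans (mul_le_mul_of_nonneg_right (le_max_left _ _) hI)

include hGlip in
lemma eqOn_apply_of_eqOn {x y : ℝ → ℝ} (hx : ContinuousOn x (Ici 0))
    (hy : ContinuousOn y (Ici 0)) (hxy : EqOn x y (Ici 0)) : EqOn (G x) (G y) (Ici 0) := by
  intro t (ht : 0 ≤ t)
  obtain ⟨C, hC⟩ := hGlip (t + 1) (by linarith)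
  have hI : ∫ u in (0:ℝ)..t, |x u - y u| = 0 := by
    rw [intervalIntegral.integral_congr (g := fun _ => 0) fun u hu => ?_,
      intervalIntegral.integral_zero]
    rw [uIcc_of_le ht] at hu
    simp [hxy (hu.1 : 0 ≤ u)]
  have := hC x y hx hy t ht (by linarith) t ⟨ht, le_rfl⟩
  rw [hI, mul_zero] at this
  exact sub_eq_zero.1 (abs_nonpos_iff.1 this)

end GeneralizedSkorokhod

theorem generalized_skorokhod_wellposed
    (G : (ℝ → ℝ) → (ℝ → ℝ))
    (hGcont : ∀ x : ℝ → ℝ, ContinuousOn x (Set.Ici 0) → ContinuousOn (G x) (Set.Ici 0))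
    (hG0 : ∀ x : ℝ → ℝ, ContinuousOn x (Set.Ici 0) → 0 ≤ G x 0)
    (hGlip : ∀ T : ℝ, 0 < T → ∃ C : ℝ,
      ∀ x y : ℝ → ℝ, ContinuousOn x (Set.Ici 0) → ContinuousOn y (Set.Ici 0) →
        ∀ t, 0 ≤ t → t ≤ T → ∀ s ∈ Set.Icc (0:ℝ) t,
          |G x s - G y s| ≤ C * ∫ u in (0:ℝ)..t, |x u - y u|) :
    ∃ X R : ℝ → ℝ, IsGSPSolution G X R ∧
      ∀ X' R' : ℝ → ℝ, IsGSPSolution G X' R' →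
        ∀ t, 0 ≤ t → X' t = X t ∧ R' t = R t := by
  have hΦc : ∀ x, ContinuousOn x (Ici 0) → ContinuousOn (skorokhodMap (G x)) (Ici 0) :=
    fun x hx => (hGcont x hx).skorokhodMap
  have hΦ := volterraLipschitz_skorokhodMap_comp hGlip hGcont
  obtain ⟨X, hXc, hXfix⟩ := hΦ.exists_fixedPoint hΦc
  refine ⟨X, skorokhodRegulator (G X),
    (isSkorokhodSolution_skorokhodMap (hGcont X hXc) (hG0 X hXc)).congr hXfix, ?_⟩
  intro X' R' hsol t ht
  have hX'c : ContinuousOn X' (Ici 0) := hsol.1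
  have hX'eq : ∀ s, 0 ≤ s → X' s = G X' s + R' s := hsol.2.2.1
  have hR' := hsol.eqOn_skorokhodRegulator (hGcont X' hX'c)
  have hX'fix : EqOn (skorokhodMap (G X')) X' (Ici 0) := fun s hs => by
    rw [hX'eq s hs, hR' hs, skorokhodMap]
  have hX'X := hΦ.eqOn_of_fixedPoints hX'c hXc hX'fix hXfix
  refine ⟨hX'X ht, ?_⟩
  rw [hR' ht]
  exact skorokhodRegulator_congr fun u hu => eqOn_apply_of_eqOn hGlip hX'c hXc hX'X hu.1
end
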